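/- Let K be a field of characteristic 2. Then K[x₁,x₂,x₃]^{A₃} = K[s₁,s₂,s₃] ⊕ b₃·K[s₁,s₂,s₃] as a K[s₁,s₂,s₃]-module, where b₃ = x₁x₂² + x₂x₃² + x₃x₁², and the generators satisfy b₃² + b₃s₁s₂ + s₂³ + b₃s₃ + s₁³s₃ + s₃² = 0. -/

import Mathlib

/-!
Let `τ` be the transposition `(0 1)` and `Δ = (x₀ - x₁)(x₁ - x₂)(x₀ - x₂)`. For an `A₃`-invariant
`p`, all odd permutations act on `p` like `τ`, so `p - τp` is alternating and vanishes on every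
hyperplane `xᵢ = xⱼ`; hence `p - τp = Δ g` with `g` symmetric. Since `τb₃ = b₃ + Δ`, the
polynomial `p + b₃ g` is fixed by `τ`, hence symmetric, and the fundamental theorem on
symmetric polynomials writes both `g` and `p + b₃ g` in terms of `s₁, s₂, s₃`. Uniqueness follows
by applying `τ` to a relation `f(s) + b₃ g(s) = 0`, which yields `Δ g(s) = 0`.
-/

open MvPolynomial

noncomputable abbrev es1 (K : Type) [Field K] : MvPolynomial (Fin 3) K :=
  X 0 + X 1 + X 2
noncomputable abbrev es2 (K : Type) [Field K] : MvPolynomial (Fin 3) K :=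
  X 0 * X 1 + X 1 * X 2 + X 2 * X 0
noncomputable abbrev es3 (K : Type) [Field K] : MvPolynomial (Fin 3) K :=
  X 0 * X 1 * X 2
noncomputable abbrev b3 (K : Type) [Field K] : MvPolynomial (Fin 3) K :=
  X 0 * X 1 ^ 2 + X 1 * X 2 ^ 2 + X 2 * X 0 ^ 2

open Equiv

section Alternating

variable {σ R : Type*} [Fintype σ] [DecidableEq σ] [CommRing R]

def IsAlternating (p : MvPolynomial σ R) : Prop :=
  ∀ π : Perm σ, rename π p = Perm.sign π • p

theorem rename_eq_rename_of_sign_eq {p : MvPolynomial σ R}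
    (hp : ∀ π : Perm σ, Perm.sign π = 1 → rename π p = p) {π π' : Perm σ}
    (h : Perm.sign π = Perm.sign π') : rename π p = rename π' p := by
  have heven : Perm.sign (π'⁻¹ * π) = 1 := by
    rw [Perm.sign_mul, Perm.sign_inv, h, Int.units_mul_self]
  calc rename π p = rename π' (rename (π'⁻¹ * π) p) := by
        rw [rename_rename, ← Perm.coe_mul, mul_inv_cancel_left]
    _ = rename π' p := by rw [hp _ heven]

theorem isSymmetric_of_rename_swap {p : MvPolynomial σ R}
    (hp : ∀ π : Perm σ, Perm.sign π = 1 → rename π p = p) {i j : σ} (hij : i ≠ j)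
    (hswap : rename (swap i j) p = p) : p.IsSymmetric := by
  intro π
  rcases Int.units_eq_one_or (Perm.sign π) with h | h
  · exact hp π h
  · rw [rename_eq_rename_of_sign_eq hp (h.trans (Perm.sign_swap hij).symm), hswap]

theorem isAlternating_of_rename_swap {p : MvPolynomial σ R}
    (hp : ∀ π : Perm σ, Perm.sign π = 1 → rename π p = p) {i j : σ} (hij : i ≠ j)
    (hswap : rename (swap i j) p = -p) : IsAlternating p := by
  intro π
  rcases Int.units_eq_one_or (Perm.sign π) with h | h
  · rw [hp π h, h, one_smul]
  · rw [rename_eq_rename_of_sign_eq hp (h.trans (Perm.sign_swap hij).symm), hswap, h,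
      Units.neg_smul, one_smul]

theorem isAlternating_sub_rename_swap {p : MvPolynomial σ R}
    (hp : ∀ π : Perm σ, Perm.sign π = 1 → rename π p = p) {i j : σ} (hij : i ≠ j) :
    IsAlternating (p - rename (swap i j) p) := by
  have hswap : ∀ π : Perm σ, rename π (rename (swap i j) p) = rename (π * swap i j) p := by
    intro π; rw [rename_rename, Perm.coe_mul]
  refine isAlternating_of_rename_swap (fun π hπ => ?_) hij ?_
  · rw [map_sub, hp π hπ, hswap, rename_eq_rename_of_sign_eq hp (π' := swap i j)
      (by rw [Perm.sign_mul, hπ, one_mul])]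
  · rw [map_sub, hswap, swap_mul_self, Perm.coe_one, rename_id, AlgHom.id_apply, neg_sub]

theorem IsAlternating.isSymmetric_of_mul [IsDomain R] {Δ g : MvPolynomial σ R}
    (hΔ : IsAlternating Δ) (hΔ0 : Δ ≠ 0) (hΔg : IsAlternating (Δ * g)) : g.IsSymmetric := by
  intro π
  apply mul_left_cancel₀ hΔ0
  apply MulAction.injective (Perm.sign π)
  simpa only [map_mul, hΔ π, smul_mul_assoc] using hΔg π

end Alternating

section LinearForms

variable {σ R : Type*} [CommRing R]

theorem X_sub_X_dvd_sub_rename_swap [DecidableEq σ] (i j : σ) (p : MvPolynomial σ R) :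
    X i - X j ∣ p - rename (swap i j) p := by
  rw [← Ideal.mem_span_singleton, ← Ideal.Quotient.eq]
  have hij : Ideal.Quotient.mk (Ideal.span {X i - X j}) (X i : MvPolynomial σ R) =
      Ideal.Quotient.mk _ (X j) :=
    Ideal.Quotient.eq.mpr (Ideal.mem_span_singleton_self _)
  have hmk : (Ideal.Quotient.mkₐ R (Ideal.span {X i - X j})).comp (rename (swap i j)) =
      Ideal.Quotient.mkₐ R _ := by
    ext k
    simp only [AlgHom.comp_apply, rename_X, Ideal.Quotient.mkₐ_eq_mk, swap_apply_def]
    split_ifs with hki hkj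
    · rw [hki, hij]
    · rw [hkj, hij]
    · rfl
  exact (AlgHom.congr_fun hmk p).symm

theorem irreducible_X_sub_X [IsDomain R] {i j : σ} (hij : i ≠ j) :
    Irreducible (X i - X j : MvPolynomial σ R) := by
  classical
  have hcoeff : coeff (Finsupp.single i 1) (X i - X j : MvPolynomial σ R) = 1 := by
    simp [coeff_X, Finsupp.single_left_inj, hij.symm]
  apply irreducible_of_totalDegree_eq_one
  · apply le_antisymm
    · exact (totalDegree_sub _ _).trans (by simp)
    · simpa using le_totalDegree (s := Finsupp.single i 1) (by simp [mem_support_iff, hcoeff])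
  · intro x hx
    exact isUnit_of_dvd_one (hcoeff ▸ hx _)

theorem isRelPrime_X_sub_X [IsDomain R] {i j k l : σ} (hij : i ≠ j) (x : σ → R)
    (hxij : x i = x j) (hxkl : x k ≠ x l) :
    IsRelPrime (X i - X j : MvPolynomial σ R) (X k - X l) := by
  refine (irreducible_X_sub_X hij).isRelPrime_iff_not_dvd.mpr fun h => hxkl ?_
  simpa [hxij, sub_eq_zero] using map_dvd (eval x) h

end LinearForms

section ThreeVariables

variable {R : Type*} [CommRing R]

theorem forall_sign_eq_one_rename_eq_iff (p : MvPolynomial (Fin 3) R) :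
    (∀ π : Perm (Fin 3), Perm.sign π = 1 → rename π p = p) ↔ rename (finRotate 3) p = p := by
  refine ⟨fun hp => hp _ (by decide), fun hc π hπ => ?_⟩
  have hA₃ : ∀ π : Perm (Fin 3), Perm.sign π = 1 →
      π = 1 ∨ π = finRotate 3 ∨ π = finRotate 3 * finRotate 3 := by decide
  rcases hA₃ π hπ with rfl | rfl | rfl
  · rw [Perm.coe_one, rename_id, AlgHom.id_apply]
  · exact hc
  · rw [Perm.coe_mul, ← rename_rename, hc, hc]

variable (R)

noncomputable def vandermonde3 : MvPolynomial (Fin 3) R :=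
  (X 0 - X 1) * (X 1 - X 2) * (X 0 - X 2)

theorem isAlternating_vandermonde3 : IsAlternating (vandermonde3 R) := by
  refine isAlternating_of_rename_swap (i := 0) (j := 1) ?_ (by decide) ?_
  · rw [forall_sign_eq_one_rename_eq_iff]
    simp only [vandermonde3, map_mul, map_sub, rename_X, finRotate_apply, Fin.reduceAdd]
    ring
  · simp only [vandermonde3, map_mul, map_sub, rename_X, swap_apply_left,
      swap_apply_right, swap_apply_def, Fin.reduceEq, ↓reduceIte]
    ring

theorem vandermonde3_ne_zero [IsDomain R] : vandermonde3 R ≠ 0 := by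
  have h : ∀ i j : Fin 3, i ≠ j → (X i - X j : MvPolynomial (Fin 3) R) ≠ 0 :=
    fun i j hij => sub_ne_zero.mpr (X_injective.ne hij)
  exact mul_ne_zero (mul_ne_zero (h 0 1 (by decide)) (h 1 2 (by decide))) (h 0 2 (by decide))

theorem vandermonde3_dvd [IsDomain R] [UniqueFactorizationMonoid R] {q : MvPolynomial (Fin 3) R}
    (h01 : X 0 - X 1 ∣ q) (h12 : X 1 - X 2 ∣ q) (h02 : X 0 - X 2 ∣ q) : vandermonde3 R ∣ q := by
  have hc01_12 := isRelPrime_X_sub_X (i := 0) (j := 1) (k := 1) (l := 2) (by decide)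
    (![0, 0, 1] : Fin 3 → R) rfl (by simp)
  have hc01_02 := isRelPrime_X_sub_X (i := 0) (j := 1) (k := 0) (l := 2) (by decide)
    (![0, 0, 1] : Fin 3 → R) rfl (by simp)
  have hc12_02 := isRelPrime_X_sub_X (i := 1) (j := 2) (k := 0) (l := 2) (by decide)
    (![0, 1, 1] : Fin 3 → R) rfl (by simp)
  exact (hc01_02.mul_left hc12_02).mul_dvd (hc01_12.mul_dvd h01 h12) h02

end ThreeVariables

section Invariants

variable (K : Type) [Field K]

theorem rename_finRotate_b3 : rename (finRotate 3) (b3 K) = b3 K := by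
  simp only [map_add, map_mul, map_pow, rename_X, finRotate_apply, Fin.reduceAdd]
  ring

theorem rename_swap_b3 : rename (swap 0 1) (b3 K) = b3 K + vandermonde3 K := by
  simp only [vandermonde3, map_add, map_mul, map_pow, rename_X, swap_apply_left,
    swap_apply_right, swap_apply_def, Fin.reduceEq, ↓reduceIte]
  ring

theorem esymm_fin_three :
    ![es1 K, es2 K, es3 K] = fun i : Fin 3 => esymm (Fin 3) K (i + 1) := by
  have h1 : Finset.powersetCard 1 (Finset.univ : Finset (Fin 3)) = {{0}, {1}, {2}} := by decide
  have h2 : Finset.powersetCard 2 (Finset.univ : Finset (Fin 3)) = {{0, 1}, {0, 2}, {1, 2}} := by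
    decide
  have h3 : Finset.powersetCard 3 (Finset.univ : Finset (Fin 3)) = {{0, 1, 2}} := by decide
  funext i
  fin_cases i <;> simp +decide [esymm, h1, h2, h3] <;> ring

theorem aeval_esymm_fin_three (f : MvPolynomial (Fin 3) K) :
    aeval ![es1 K, es2 K, es3 K] f = esymmAlgHom (Fin 3) K 3 f := by
  rw [esymmAlgHom_apply, esymm_fin_three]

theorem isSymmetric_aeval_esymm (f : MvPolynomial (Fin 3) K) :
    (aeval ![es1 K, es2 K, es3 K] f).IsSymmetric := by
  rw [aeval_esymm_fin_three, ← mem_symmetricSubalgebra]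
  exact SetLike.coe_mem _

theorem aeval_esymm_injective :
    Function.Injective (aeval (R := K) ![es1 K, es2 K, es3 K]) := by
  intro f g hfg
  simp only [aeval_esymm_fin_three] at hfg
  exact (esymmAlgHom_fin_bijective K 3).1 (Subtype.ext hfg)

theorem exists_aeval_esymm_eq {p : MvPolynomial (Fin 3) K} (hp : p.IsSymmetric) :
    ∃ f : MvPolynomial (Fin 3) K, aeval ![es1 K, es2 K, es3 K] f = p := by
  obtain ⟨f, hf⟩ := (esymmAlgHom_fin_bijective K 3).2 ⟨p, hp⟩
  exact ⟨f, by rw [aeval_esymm_fin_three, hf]⟩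

theorem exists_eq_aeval_esymm_add_b3_mul {p : MvPolynomial (Fin 3) K}
    (hp : ∀ π : Perm (Fin 3), Perm.sign π = 1 → rename π p = p) :
    ∃ f g : MvPolynomial (Fin 3) K,
      p = aeval ![es1 K, es2 K, es3 K] f + b3 K * aeval ![es1 K, es2 K, es3 K] g := by
  have hdvd : ∀ i j : Fin 3, i ≠ j → X i - X j ∣ p - rename (swap 0 1) p := fun i j hij => by
    have hsign : Perm.sign (swap (0 : Fin 3) 1) = Perm.sign (swap i j) := by
      rw [Perm.sign_swap (by decide), Perm.sign_swap hij]
    rw [rename_eq_rename_of_sign_eq hp hsign]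
    exact X_sub_X_dvd_sub_rename_swap i j p
  obtain ⟨g, hg⟩ := vandermonde3_dvd K (hdvd 0 1 (by decide)) (hdvd 1 2 (by decide))
    (hdvd 0 2 (by decide))
  have hgsym : g.IsSymmetric := (isAlternating_vandermonde3 K).isSymmetric_of_mul
    (vandermonde3_ne_zero K) (hg ▸ isAlternating_sub_rename_swap hp (by decide))
  have hsym : (p + b3 K * g).IsSymmetric := by
    refine isSymmetric_of_rename_swap (i := 0) (j := 1) ?_ (by decide) ?_
    · rw [forall_sign_eq_one_rename_eq_iff, map_add, map_mul,
        (forall_sign_eq_one_rename_eq_iff p).mp hp, rename_finRotate_b3, hgsym]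
    · rw [map_add, map_mul, rename_swap_b3, hgsym]
      linear_combination -hg
  obtain ⟨F, hF⟩ := exists_aeval_esymm_eq K hsym
  obtain ⟨G, hG⟩ := exists_aeval_esymm_eq K hgsym
  exact ⟨F, -G, by rw [hF, map_neg, hG]; ring⟩

theorem eq_zero_of_aeval_esymm_add_b3_mul_eq_zero {f g : MvPolynomial (Fin 3) K}
    (h : aeval ![es1 K, es2 K, es3 K] f + b3 K * aeval ![es1 K, es2 K, es3 K] g = 0) :
    f = 0 ∧ g = 0 := by
  have hswap := congrArg (rename (swap 0 1)) h
  rw [map_add, map_mul, rename_swap_b3, isSymmetric_aeval_esymm, isSymmetric_aeval_esymm,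
    map_zero] at hswap
  have hg : aeval ![es1 K, es2 K, es3 K] g = 0 :=
    (mul_eq_zero.mp (by linear_combination hswap - h)).resolve_left (vandermonde3_ne_zero K)
  have hf : aeval ![es1 K, es2 K, es3 K] f = 0 := by rwa [hg, mul_zero, add_zero] at h
  exact ⟨aeval_esymm_injective K (hf.trans (map_zero _).symm),
    aeval_esymm_injective K (hg.trans (map_zero _).symm)⟩

/- `b₃` is a root of `(T - b₃)(T - τb₃) = T² - (s₁s₂ - 3s₃)T + (s₂³ + s₁³s₃ - 6s₁s₂s₃ + 9s₃²)`,
which reduces mod 2 to the stated relation. -/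
theorem b3_relation [CharP K 2] :
    b3 K ^ 2 + b3 K * es1 K * es2 K + es2 K ^ 3 + b3 K * es3 K
      + es1 K ^ 3 * es3 K + es3 K ^ 2 = 0 := by
  linear_combination (b3 K * es1 K * es2 K - b3 K * es3 K + 3 * es1 K * es2 K * es3 K
    - 4 * es3 K ^ 2) * CharTwo.two_eq_zero (R := MvPolynomial (Fin 3) K)

end Invariants

/-- in characteristic 2, K[x₁,x₂,x₃]^{A₃} = K[s₁,s₂,s₃] ⊕
b₃·K[s₁,s₂,s₃] (every A₃-invariant polynomial is uniquely of the form
f(s₁,s₂,s₃) + b₃·g(s₁,s₂,s₃)), and b₃² + b₃s₁s₂ + s₂³ + b₃s₃ + s₁³s₃ + s₃² = 0. -/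
theorem stmt_15 (K : Type) [Field K] [CharP K 2] :
    (∀ p : MvPolynomial (Fin 3) K,
      (∀ σ : Equiv.Perm (Fin 3), Equiv.Perm.sign σ = 1 → rename (⇑σ) p = p) ↔
      ∃ f g : MvPolynomial (Fin 3) K,
        p = aeval ![es1 K, es2 K, es3 K] f + b3 K * aeval ![es1 K, es2 K, es3 K] g) ∧
    (∀ f g f' g' : MvPolynomial (Fin 3) K,
      aeval ![es1 K, es2 K, es3 K] f + b3 K * aeval ![es1 K, es2 K, es3 K] g =
        aeval ![es1 K, es2 K, es3 K] f' + b3 K * aeval ![es1 K, es2 K, es3 K] g' →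
      f = f' ∧ g = g') ∧
    b3 K ^ 2 + b3 K * es1 K * es2 K + es2 K ^ 3 + b3 K * es3 K
      + es1 K ^ 3 * es3 K + es3 K ^ 2 = 0 := by
  refine ⟨fun p => ⟨exists_eq_aeval_esymm_add_b3_mul K, ?_⟩, fun f g f' g' h => ?_, b3_relation K⟩
  · rintro ⟨f, g, rfl⟩
    rw [forall_sign_eq_one_rename_eq_iff, map_add, map_mul, isSymmetric_aeval_esymm,
      isSymmetric_aeval_esymm, rename_finRotate_b3]
  · obtain ⟨hf, hg⟩ := eq_zero_of_aeval_esymm_add_b3_mul_eq_zero K (f := f - f') (g := g - g')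
      (by simp only [map_sub]; linear_combination h)
    exact ⟨sub_eq_zero.mp hf, sub_eq_zero.mp hg⟩
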